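/- arXiv:2004.04155 — 6 statements merged into one kernel-verified Lean document; each statement's English description precedes it below -/
import Mathlib

section
/- In a C*-algebra A, triple cube roots are unique: if z, w ∈ A satisfy z z* z = w w* w, then z = w. In particular, every element of A admits at most one cube root with respect to the triple product {a,b,c} = (a b* c + c b* a)/2 (note {z,z,z} = z z* z). -/
/-!
Since `(z* z)³ = (z z* z)* (z z* z)`, the positive element `z* z` is the unique positive cube root
of a quantity determined by `z z* z`; hence `z* z = w* w`. Then `d = z - w` satisfies
`d (z* z) = d (w* w) = 0`, and the C*-identity turns `x (y* y) = 0` into `x y* = 0`, so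
`d d* = d z* - d w* = 0` and `d = 0`.
-/

open scoped NNReal

namespace CFC

variable {A : Type*} [PartialOrder A] [NonUnitalRing A] [TopologicalSpace A] [StarRing A]
  [Module ℝ A] [SMulCommClass ℝ A A] [IsScalarTower ℝ A A] [StarOrderedRing A]
  [NonUnitalContinuousFunctionalCalculus ℝ A IsSelfAdjoint] [NonnegSpectrumClass ℝ A]
  [IsSemitopologicalRing A] [T2Space A]

lemma eq_of_cube_eq_of_nonneg {a b : A} (ha : 0 ≤ a) (hb : 0 ≤ b)
    (h : a * a * a = b * b * b) : a = b := by
  have cube_root (c : A) (hc : 0 ≤ c) : (c * c * c) ^ (3⁻¹ : ℝ≥0) = c := by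
    rw [← nnrpow_three c, nnrpow_nnrpow_inv c three_ne_zero]
  rw [← cube_root a ha, h, cube_root b hb]

end CFC

namespace CStarRing

variable {E : Type*} [NonUnitalNormedRing E] [StarRing E] [CStarRing E]

lemma mul_star_eq_zero_of_mul_star_mul_self_eq_zero {x y : E} (h : x * (star y * y) = 0) :
    x * star y = 0 := by
  rw [← mul_star_self_eq_zero_iff]
  calc x * star y * star (x * star y) = x * (star y * y) * star x := by
        simp only [star_mul, star_star, mul_assoc]
    _ = 0 := by rw [h, zero_mul]

lemma eq_of_star_mul_self_eq_of_mul_star_mul_self_eq {z w : E} (hs : star z * z = star w * w)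
    (hc : z * (star z * z) = w * (star w * w)) : z = w := by
  have hz : (z - w) * star z = 0 :=
    mul_star_eq_zero_of_mul_star_mul_self_eq_zero <| by rw [sub_mul, hc, hs, sub_self]
  have hw : (z - w) * star w = 0 :=
    mul_star_eq_zero_of_mul_star_mul_self_eq_zero <| by rw [sub_mul, ← hs, hc, hs, sub_self]
  rw [← sub_eq_zero, ← mul_star_self_eq_zero_iff, star_sub, mul_sub, hz, hw, sub_self]

end CStarRing

/-- In a C*-algebra, triple cube roots are unique: if `z z* z = w w* w` then `z = w`.
In particular every element admits at most one cube root with respect to the triple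
product `{a,b,c} = (a b* c + c b* a)/2`, since `{z,z,z} = z z* z`. -/
theorem triple_cube_injective {A : Type*} [NonUnitalCStarAlgebra A] (z w : A)
    (h : z * star z * z = w * star w * w) : z = w := by
  let := CStarAlgebra.spectralOrder A
  have := CStarAlgebra.spectralOrderedRing A
  have cube_eq (x : A) : star x * x * (star x * x) * (star x * x) =
      star (x * star x * x) * (x * star x * x) := by
    simp only [star_mul, star_star, mul_assoc]
  have hs : star z * z = star w * w :=
    CFC.eq_of_cube_eq_of_nonneg (star_mul_self_nonneg z) (star_mul_self_nonneg w)
      (by rw [cube_eq, cube_eq, h])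
  exact CStarRing.eq_of_star_mul_self_eq_of_mul_star_mul_self_eq hs
    (by rw [← mul_assoc, ← mul_assoc, h])
end

section
/- Let A be a C*-algebra, let B be a unital C*-algebra, let h ∈ B be invertible, and let r = h ((h* h)^{1/2})^{-1}, which is a unitary in B. Let S : A → B be a continuous linear map which is a triple homomorphism (S({a,b,c}) = {S(a),S(b),S(c)} for all a,b,c ∈ A) and satisfies h* S(x) = S(x*)* h, h S(x*)* = S(x) h*, and h r* S(x) = S(x) r* h for all x ∈ A. Define T : A → B by T(x) = h r* S(x). Then {T(a), T(b), T(c)} = (h h* h) r* S({a,b,c}) for all a, b, c ∈ A. -/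
/-!
Write `p = (h* h)^{1/2}`, so that `r = h p⁻¹` and `r* = p⁻¹ h*`. From `p² = h* h` one gets
`r (h* h) r* = h h*` and `r* (h h*) = (h* h) r*`, while the two intertwining relations give
`S(x) (h* h) = (h h*) S(x)`. Moving these factors through
`T(a) T(b)* T(c) = h r* S(a) S(b)* r h* h r* S(c)` collects them into `h h* h r* S(a) S(b)* S(c)`;
symmetrizing in `a, c` and using that `S` is a triple homomorphism gives the claim.
-/

/-- The canonical triple product `{a,b,c} = (a b* c + c b* a) / 2` of a C*-algebra. -/
noncomputable def tripleProduct {A : Type*} [NonUnitalCStarAlgebra A] (a b c : A) : A :=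
  (2 : ℂ)⁻¹ • (a * star b * c + c * star b * a)

open scoped Ring

lemma cfc_sqrt_star_mul_self_mul_self {A : Type*} [CStarAlgebra A] (a : A) :
    cfc Real.sqrt (star a * a) * cfc Real.sqrt (star a * a) = star a * a := by
  rw [← cfc_mul ..]
  refine (cfc_congr fun x hx ↦ ?_).trans (cfc_id' ℝ (star a * a))
  exact Real.mul_self_sqrt (spectrum_star_mul_self_nonneg (A := A) x hx)

lemma isUnit_cfc_sqrt_star_mul_self {A : Type*} [CStarAlgebra A] {a : A} (ha : IsUnit a) :
    IsUnit (cfc Real.sqrt (star a * a)) := by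
  rw [← isUnit_mul_self_iff, cfc_sqrt_star_mul_self_mul_self]
  exact ha.star.mul ha

section Polar

variable {R : Type*} [Semiring R] [StarRing R] {h p : R}

lemma IsSelfAdjoint.star_mul_ringInverse (hp : IsSelfAdjoint p) :
    star (h * p⁻¹ʳ) = p⁻¹ʳ * star h := by
  rw [star_mul, hp.ringInverse.star_eq]

lemma mul_ringInverse_mul_star_mul_self_mul_star (hpu : IsUnit p) (hp : IsSelfAdjoint p)
    (hpp : p * p = star h * h) :
    h * p⁻¹ʳ * (star h * h) * star (h * p⁻¹ʳ) = h * star h := by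
  rw [hp.star_mul_ringInverse, ← hpp]
  simp only [mul_assoc, Ring.inverse_mul_cancel_left _ _ hpu, Ring.mul_inverse_cancel_left _ _ hpu]

lemma star_mul_ringInverse_mul_mul_star (hpu : IsUnit p) (hp : IsSelfAdjoint p)
    (hpp : p * p = star h * h) :
    star (h * p⁻¹ʳ) * (h * star h) = star h * h * star (h * p⁻¹ʳ) := by
  rw [hp.star_mul_ringInverse, mul_assoc, ← mul_assoc (star h), ← hpp]
  simp only [mul_assoc, Ring.inverse_mul_cancel_left _ _ hpu, Ring.mul_inverse_cancel_left _ _ hpu]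

end Polar

section Intertwining

variable {R : Type*} [Monoid R] [StarMul R] {h : R}

lemma mul_star_mul_self_eq_of_intertwines {s t : R} (h₁ : star h * s = star t * h)
    (h₂ : h * star t = s * star h) : s * (star h * h) = h * star h * s := by
  rw [← mul_assoc, ← h₂, mul_assoc, ← h₁, ← mul_assoc]

lemma mul_star_mul_mul_star_mul_eq {r a b c : R}
    (hr₁ : r * (star h * h) * star r = h * star h)
    (hr₂ : star r * (h * star h) = star h * h * star r)
    (ha : a * (star h * h) = h * star h * a) (hb : b * (star h * h) = h * star h * b) :
    h * star r * a * star (h * star r * b) * (h * star r * c) =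
      h * star h * h * star r * (a * star b * c) := by
  have hb' : star b * (h * star h) = star h * h * star b := by
    simpa only [star_mul, star_star, mul_assoc] using congrArg star hb.symm
  calc h * star r * a * star (h * star r * b) * (h * star r * c)
      = h * star r * a * star b * (r * (star h * h) * star r) * c := by
        simp only [star_mul, star_star, mul_assoc]
    _ = h * star r * a * (star b * (h * star h)) * c := by rw [hr₁]; simp only [mul_assoc]
    _ = h * star r * (a * (star h * h)) * star b * c := by rw [hb']; simp only [mul_assoc]
    _ = h * (star r * (h * star h)) * a * star b * c := by rw [ha]; simp only [mul_assoc]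
    _ = h * star h * h * star r * (a * star b * c) := by rw [hr₂]; simp only [mul_assoc]

end Intertwining

theorem tripleProduct_of_orthogonality_preserving_form_general {A B : Type*}
    [NonUnitalCStarAlgebra A] [CStarAlgebra B]
    (h : B) (hinv : IsUnit h)
    (r : B) (hr : r = h * Ring.inverse (cfc Real.sqrt (star h * h)))
    (S : A →L[ℂ] B)
    (hS : ∀ a b c : A, S (tripleProduct a b c) = tripleProduct (S a) (S b) (S c))
    (h1 : ∀ x : A, star h * S x = star (S (star x)) * h)
    (h2 : ∀ x : A, h * star (S (star x)) = S x * star h) :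
    ∀ a b c : A,
      tripleProduct (h * star r * S a) (h * star r * S b) (h * star r * S c) =
        h * star h * h * star r * S (tripleProduct a b c) := by
  intro a b c
  subst hr
  have hpu := isUnit_cfc_sqrt_star_mul_self hinv
  have hp : IsSelfAdjoint (cfc Real.sqrt (star h * h)) := cfc_predicate _ _
  have hpp := cfc_sqrt_star_mul_self_mul_self h
  have hr₁ := mul_ringInverse_mul_star_mul_self_mul_star hpu hp hpp
  have hr₂ := star_mul_ringInverse_mul_mul_star hpu hp hpp
  have hSx (x : A) := mul_star_mul_self_eq_of_intertwines (h1 x) (h2 x)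
  have hT (x y z : A) := mul_star_mul_mul_star_mul_eq (c := S z) hr₁ hr₂ (hSx x) (hSx y)
  rw [hS, tripleProduct, tripleProduct, hT, hT, mul_smul_comm, mul_add]

/-- Let `h` be invertible in a unital C*-algebra `B`, let `r = h ((h* h)^{1/2})⁻¹` be the
unitary in the polar decomposition of `h`, and let `S : A → B` be a continuous triple
homomorphism intertwined with `h` and `r` as stated.  Then the map `T x = h r* S x`
satisfies `{T a, T b, T c} = (h h* h) r* S {a,b,c}` for all `a, b, c`. -/
theorem tripleProduct_of_orthogonality_preserving_form {A B : Type*}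
    [NonUnitalCStarAlgebra A] [CStarAlgebra B]
    (h : B) (hinv : IsUnit h)
    (r : B) (hr : r = h * Ring.inverse (cfc Real.sqrt (star h * h)))
    (S : A →L[ℂ] B)
    (hS : ∀ a b c : A, S (tripleProduct a b c) = tripleProduct (S a) (S b) (S c))
    (h1 : ∀ x : A, star h * S x = star (S (star x)) * h)
    (h2 : ∀ x : A, h * star (S (star x)) = S x * star h)
    (h3 : ∀ x : A, h * star r * S x = S x * star r * h) :
    ∀ a b c : A,
      tripleProduct (h * star r * S a) (h * star r * S b) (h * star r * S c) =
        h * star h * h * star r * S (tripleProduct a b c) :=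
  tripleProduct_of_orthogonality_preserving_form_general h hinv r hr S hS h1 h2
end

section
/- Let Φ : A → B be a continuous Jordan *-isomorphism between C*-algebras, i.e., a continuous linear bijection with Φ(a ∘ b) = Φ(a) ∘ Φ(b) and Φ(a*) = Φ(a)* for all a, b ∈ A. Then Φ maps the center of A onto the center of B, and for every a in the center of A and every b ∈ A one has Φ(a b) = Φ(a) Φ(b). -/
/-!
The center of a C*-algebra is determined by its Jordan structure: `z` is central iff
`z ∘ (x ∘ y) = (z ∘ x) ∘ y` for all `x, y`. Indeed this Jordan associator is `⁅⁅y, z⁆, x⁆`, so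
associativity says that every commutator `⁅y, z⁆` is central, and a central commutator vanishes
in a C*-algebra (Kleinecke–Shirokov): if `c = ⁅s, v⁆` commutes with `s` and `v`, then
`ad(s)ⁿ (vⁿ) = n! cⁿ`, whence `n! ‖cⁿ‖ ≤ (2 ‖s‖ ‖v‖)ⁿ`, which is incompatible with
`‖c ^ 2 ^ k‖ = ‖c‖ ^ 2 ^ k` for the normal element `c ≠ 0`. So a Jordan isomorphism maps center
onto center, and for central `a`, `2 Φ(ab) = Φ(ab + ba) = Φa Φb + Φb Φa = 2 Φa Φb`.
-/

open Filter Nat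

section Commutator

attribute [local instance] LieRing.ofAssociativeRing

variable {R : Type*} [Ring R] {s v : R}

theorem lie_pow_succ_of_commute (hv : Commute v ⁅s, v⁆) (m : ℕ) :
    ⁅s, v ^ (m + 1)⁆ = (m + 1) • (⁅s, v⁆ * v ^ m) := by
  induction m with
  | zero => simp
  | succ m ih =>
    have leibniz : ⁅s, v * v ^ (m + 1)⁆ = ⁅s, v⁆ * v ^ (m + 1) + v * ⁅s, v ^ (m + 1)⁆ := by
      simp only [Ring.lie_def]; noncomm_ring
    rw [pow_succ' v (m + 1), leibniz, ih, mul_smul_comm, ← mul_assoc, hv.eq, mul_assoc,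
      ← pow_succ' v m, succ_nsmul' _ (m + 1)]

theorem lie_mul_of_commute {a : R} (ha : Commute s a) (x : R) : ⁅s, a * x⁆ = a * ⁅s, x⁆ := by
  simp only [Ring.lie_def, ← mul_assoc, ha.eq, mul_sub]

theorem iterate_lie_pow_of_commute (hs : Commute s ⁅s, v⁆) (hv : Commute v ⁅s, v⁆) {k n : ℕ}
    (hkn : k ≤ n) : (⁅s, ·⁆)^[k] (v ^ n) = n.descFactorial k • (⁅s, v⁆ ^ k * v ^ (n - k)) := by
  induction k with
  | zero => simp
  | succ k ih =>
    obtain ⟨m, hm⟩ : ∃ m, n - k = m + 1 := ⟨n - (k + 1), by omega⟩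
    have hmk : n - (k + 1) = m := by omega
    rw [Function.iterate_succ_apply', ih (by omega), lie_nsmul, hm,
      lie_mul_of_commute (hs.pow_right k), lie_pow_succ_of_commute hv, mul_smul_comm,
      ← mul_assoc, ← pow_succ, smul_smul, hmk, ← hm, mul_comm, ← Nat.descFactorial_succ]

end Commutator

theorem norm_iterate_lie_le {R : Type*} [NonUnitalNormedRing R] (s x : R) (k : ℕ) :
    ‖(⁅s, ·⁆)^[k] x‖ ≤ (2 * ‖s‖) ^ k * ‖x‖ := by
  induction k generalizing x with
  | zero => simp
  | succ k ih =>
    rw [Function.iterate_succ_apply]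
    calc ‖(⁅s, ·⁆)^[k] ⁅s, x⁆‖ ≤ (2 * ‖s‖) ^ k * ‖⁅s, x⁆‖ := ih _
      _ ≤ (2 * ‖s‖) ^ k * (2 * ‖s‖ * ‖x‖) := by
        gcongr
        calc ‖s * x - x * s‖ ≤ ‖s‖ * ‖x‖ + ‖x‖ * ‖s‖ :=
              (norm_sub_le _ _).trans (add_le_add (norm_mul_le _ _) (norm_mul_le _ _))
          _ = 2 * ‖s‖ * ‖x‖ := by ring
      _ = (2 * ‖s‖) ^ (k + 1) * ‖x‖ := by ring

theorem factorial_mul_norm_lie_pow_le {R : Type*} [NormedRing R] [NormedSpace ℝ R] {s v : R}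
    (hs : Commute s ⁅s, v⁆) (hv : Commute v ⁅s, v⁆) {n : ℕ} (hn : 0 < n) :
    n ! * ‖⁅s, v⁆ ^ n‖ ≤ (2 * ‖s‖ * ‖v‖) ^ n := by
  have hiter : (⁅s, ·⁆)^[n] (v ^ n) = n ! • ⁅s, v⁆ ^ n := by
    simp [iterate_lie_pow_of_commute hs hv le_rfl, Nat.descFactorial_self]
  calc (n ! : ℝ) * ‖⁅s, v⁆ ^ n‖ = ‖(⁅s, ·⁆)^[n] (v ^ n)‖ := by
        rw [hiter, RCLike.norm_nsmul ℝ, nsmul_eq_mul]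
    _ ≤ (2 * ‖s‖) ^ n * ‖v‖ ^ n := by
        grw [norm_iterate_lie_le, norm_pow_le' v hn]
    _ = (2 * ‖s‖ * ‖v‖) ^ n := (mul_pow _ _ _).symm

section CStarRing

variable {E : Type*} [NormedRing E] [StarRing E] [CStarRing E]

theorem IsStarNormal.norm_pow_two_pow (x : E) [IsStarNormal x] (n : ℕ) :
    ‖x ^ 2 ^ n‖ = ‖x‖ ^ 2 ^ n := by
  have h : ‖x ^ 2 ^ n‖ * ‖x ^ 2 ^ n‖ = ‖x‖ ^ 2 ^ n * ‖x‖ ^ 2 ^ n := by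
    rw [← CStarRing.norm_star_mul_self, star_pow, ← (star_comm_self (x := x)).mul_pow,
      (IsSelfAdjoint.star_mul_self x).norm_pow_two_pow, CStarRing.norm_star_mul_self, mul_pow]
  exact (mul_self_inj (norm_nonneg _) (by positivity)).1 h

theorem IsStarNormal.eq_zero_of_factorial_mul_norm_pow_le (x : E) [IsStarNormal x] (M : ℝ)
    (h : ∀ n, 0 < n → n ! * ‖x ^ n‖ ≤ M ^ n) : x = 0 := by
  by_contra hx
  have hpos : 0 < ‖x‖ := norm_pos_iff.2 hx
  have hfac : ∀ k : ℕ, ((2 ^ k) ! : ℝ) ≤ (M / ‖x‖) ^ 2 ^ k := fun k => by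
    have := h (2 ^ k) (Nat.two_pow_pos k)
    rw [IsStarNormal.norm_pow_two_pow] at this
    rw [div_pow, le_div_iff₀ (by positivity)]
    exact this
  have htends : Tendsto (fun k : ℕ => (M / ‖x‖) ^ 2 ^ k / ((2 ^ k) ! : ℝ)) atTop (nhds 0) :=
    (FloorSemiring.tendsto_pow_div_factorial_atTop _).comp
      (tendsto_pow_atTop_atTop_of_one_lt one_lt_two)
  obtain ⟨k, hk⟩ := (htends.eventually (gt_mem_nhds one_pos)).exists
  rw [div_lt_one (by positivity)] at hk
  exact (hfac k).not_gt hk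

end CStarRing

theorem Unitization.inr_mem_center {R A : Type*} [CommSemiring R] [NonUnitalSemiring A]
    [Module R A] [IsScalarTower R A A] [SMulCommClass R A A] {a : A} (ha : a ∈ Set.center A) :
    (a : Unitization R A) ∈ Set.center (Unitization R A) := by
  refine Semigroup.mem_center_iff.2 fun x => ?_
  induction x using Unitization.ind with
  | inl_add_inr r b =>
    rw [add_mul, mul_add, Unitization.inl_mul_inr, Unitization.inr_mul_inl,
      ← Unitization.inr_mul, ← Unitization.inr_mul, Semigroup.mem_center_iff.1 ha b]

theorem commute_of_lie_mem_center {B : Type*} [NonUnitalCStarAlgebra B] {s v : B}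
    (h : ⁅s, v⁆ ∈ Set.center B) : Commute s v := by
  let C := Unitization ℂ B
  have hC : ⁅(s : C), (v : C)⁆ ∈ Set.center C := by
    simpa [Ring.lie_def] using Unitization.inr_mem_center (R := ℂ) h
  have hcomm (x : C) : Commute x ⁅(s : C), (v : C)⁆ := Semigroup.mem_center_iff.1 hC x
  have : IsStarNormal ⁅(s : C), (v : C)⁆ := ⟨hcomm _⟩
  have hzero : ⁅(s : C), (v : C)⁆ = 0 := IsStarNormal.eq_zero_of_factorial_mul_norm_pow_le _ _
    fun n hn => factorial_mul_norm_lie_pow_le (hcomm _) (hcomm _) hn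
  rw [Ring.lie_def, sub_eq_zero, ← Unitization.inr_mul, ← Unitization.inr_mul] at hzero
  exact Unitization.inr_injective hzero

theorem jordan_associator_eq_lie_lie {R : Type*} [NonUnitalRing R] (z x y : R) :
    (z * x + x * z) * y + y * (z * x + x * z) - (z * (x * y + y * x) + (x * y + y * x) * z) =
      ⁅⁅y, z⁆, x⁆ := by
  simp only [Ring.lie_def]; noncomm_ring

theorem mem_center_iff_jordan_assoc {B : Type*} [NonUnitalCStarAlgebra B] {z : B} :
    z ∈ Set.center B ↔ ∀ x y : B,
      z * (x * y + y * x) + (x * y + y * x) * z = (z * x + x * z) * y + y * (z * x + x * z) := by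
  refine ⟨fun hz x y => ?_, fun h => Semigroup.mem_center_iff.2 fun y => ?_⟩
  · rw [eq_comm, ← sub_eq_zero, jordan_associator_eq_lie_lie, Ring.lie_def y,
      Semigroup.mem_center_iff.1 hz y, sub_self, Ring.lie_def, zero_mul, mul_zero,
      sub_self]
  · refine commute_of_lie_mem_center (Semigroup.mem_center_iff.2 fun x => ?_)
    rw [eq_comm, ← sub_eq_zero, ← Ring.lie_def, ← jordan_associator_eq_lie_lie, h x y, sub_self]

theorem image_center_eq_of_jordan {A B : Type*} [NonUnitalCStarAlgebra A]
    [NonUnitalCStarAlgebra B] (f : A → B) (hf : Function.Bijective f)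
    (hJ : ∀ a b, f (a * b + b * a) = f a * f b + f b * f a) :
    f '' Set.center A = Set.center B := by
  have hmem (z : A) : f z ∈ Set.center B ↔ z ∈ Set.center A := by
    simp only [mem_center_iff_jordan_assoc, hf.2.forall₂, ← hJ, hf.1.eq_iff]
  ext w
  obtain ⟨z, rfl⟩ := hf.2 w
  rw [hf.1.mem_set_image, hmem]

theorem setOf_forall_mul_comm_eq_center (M : Type*) [Semigroup M] :
    {z : M | ∀ x, z * x = x * z} = Set.center M := by
  ext z; simp [Semigroup.mem_center_iff, eq_comm]

theorem jordan_star_isomorphism_center_general {A B : Type*}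
    [NonUnitalCStarAlgebra A] [NonUnitalCStarAlgebra B] (Φ : A →L[ℂ] B)
    (hbij : Function.Bijective Φ)
    (hjordan : ∀ a b : A,
      Φ ((2 : ℂ)⁻¹ • (a * b + b * a)) = (2 : ℂ)⁻¹ • (Φ a * Φ b + Φ b * Φ a)) :
    Φ '' {z : A | ∀ x : A, z * x = x * z} = {w : B | ∀ y : B, w * y = y * w} ∧
      ∀ a : A, (∀ x : A, a * x = x * a) → ∀ b : A, Φ (a * b) = Φ a * Φ b := by
  have hJ (a b : A) : Φ (a * b + b * a) = Φ a * Φ b + Φ b * Φ a :=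
    smul_right_injective B (inv_ne_zero (two_ne_zero' ℂ)) <| by
      simpa only [map_smul] using hjordan a b
  have hcenter : Φ '' {z : A | ∀ x, z * x = x * z} = {w : B | ∀ y, w * y = y * w} := by
    simpa only [setOf_forall_mul_comm_eq_center] using image_center_eq_of_jordan Φ hbij hJ
  refine ⟨hcenter, fun a ha b => ?_⟩
  have hΦa : Φ a ∈ {w : B | ∀ y, w * y = y * w} := hcenter ▸ Set.mem_image_of_mem Φ ha
  have h := hJ a b
  rw [← ha b, ← hΦa, map_add, ← two_smul ℂ, ← two_smul ℂ] at h
  exact smul_right_injective B (two_ne_zero' ℂ) h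

/-- A continuous Jordan *-isomorphism `Φ` between C*-algebras maps the center of `A` onto
the center of `B`, and acts multiplicatively on central elements:
`Φ (a b) = Φ a * Φ b` whenever `a` is central. -/
theorem jordan_star_isomorphism_center {A B : Type*}
    [NonUnitalCStarAlgebra A] [NonUnitalCStarAlgebra B] (Φ : A →L[ℂ] B)
    (hbij : Function.Bijective Φ)
    (hjordan : ∀ a b : A,
      Φ ((2 : ℂ)⁻¹ • (a * b + b * a)) = (2 : ℂ)⁻¹ • (Φ a * Φ b + Φ b * Φ a))
    (hstar : ∀ a : A, Φ (star a) = star (Φ a)) :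
    Φ '' {z : A | ∀ x : A, z * x = x * z} = {w : B | ∀ y : B, w * y = y * w} ∧
      ∀ a : A, (∀ x : A, a * x = x * a) → ∀ b : A, Φ (a * b) = Φ a * Φ b :=
  jordan_star_isomorphism_center_general Φ hbij hjordan
end

section
/- Let A be a C*-algebra and a ∈ A. For each t ∈ ℝ, the operator exp(i t L(a,a)) on A, where L(a,a) : A → A is the bounded linear map L(a,a)(x) = (a a* x + x a* a)/2, is a bijective linear isometry of A; thus {exp(i t L(a,a)) : t ∈ ℝ} is a one-parameter group of surjective linear isometries on A. -/
/-!
On the unitization `U` of `A`, the operator `i t L(a,a)` is the restriction of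
`x ↦ i h x + x i k` with `h = (t/2) a a*` and `k = (t/2) a* a` self-adjoint. Left and right
multiplications commute, so the exponential of the latter is `x ↦ exp (i h) x exp (i k)`, a
two-sided multiplication by unitaries and hence isometric; restricting to `A ⊆ U` gives the
isometry. Bijectivity holds for the exponential of any bounded operator, which is invertible.
-/

open NormedSpace ContinuousLinearMap

namespace ContinuousLinearMap

theorem comp_pow_eq_pow_comp {R E F : Type*} [Semiring R] [TopologicalSpace E]
    [AddCommMonoid E] [Module R E] [TopologicalSpace F] [AddCommMonoid F] [Module R F]
    (ι : E →L[R] F) {T : E →L[R] E} {M : F →L[R] F}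
    (h : ι ∘L T = M ∘L ι) (n : ℕ) : ι ∘L (T ^ n) = (M ^ n) ∘L ι := by
  induction n with
  | zero => rfl
  | succ n ih => rw [pow_succ, pow_succ, mul_def, mul_def, ← comp_assoc, ih, comp_assoc, h,
      comp_assoc]

section Intertwining

variable {𝕜 E F : Type*} [RCLike 𝕜] [NormedAddCommGroup E] [NormedSpace 𝕜 E] [CompleteSpace E]
  [NormedAddCommGroup F] [NormedSpace 𝕜 F] [CompleteSpace F]

theorem comp_exp_eq_exp_comp (ι : E →L[𝕜] F) {T : E →L[𝕜] E} {M : F →L[𝕜] F}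
    (h : ι ∘L T = M ∘L ι) : ι ∘L exp T = exp M ∘L ι := by
  have hT := (exp_series_hasSum_exp' (𝕂 := 𝕜) T).mapL (compL 𝕜 E E F ι)
  have hM := (exp_series_hasSum_exp' (𝕂 := 𝕜) M).mapL ((compL 𝕜 E F F).flip ι)
  refine hT.unique ?_
  simpa only [compL_apply, flip_apply, comp_smul, smul_comp, comp_pow_eq_pow_comp ι h] using hM

theorem isometry_exp_of_comp_eq (ι : E →ₗᵢ[𝕜] F) {T : E →L[𝕜] E} {M : F →L[𝕜] F}
    (h : ι.toContinuousLinearMap ∘L T = M ∘L ι.toContinuousLinearMap)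
    (hM : Isometry ⇑(exp M)) : Isometry ⇑(exp T) := by
  refine AddMonoidHomClass.isometry_of_norm _ fun x ↦ ?_
  calc ‖exp T x‖ = ‖(ι.toContinuousLinearMap ∘L exp T) x‖ := (ι.norm_map _).symm
    _ = ‖exp M (ι x)‖ := by rw [comp_exp_eq_exp_comp _ h]; rfl
    _ = ‖x‖ := by rw [(AddMonoidHomClass.isometry_iff_norm _).mp hM, ι.norm_map]

end Intertwining

theorem bijective_exp {𝕜 E : Type*} [RCLike 𝕜] [NormedAddCommGroup E] [NormedSpace 𝕜 E]
    [CompleteSpace E] (T : E →L[𝕜] E) : Function.Bijective ⇑(exp T) := by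
  let +nondep : NormedAlgebra ℚ (E →L[𝕜] E) := .restrictScalars ℚ 𝕜 _
  exact isUnit_iff_bijective.mp (isUnit_exp T)

section Multiplication

variable {𝕜 R : Type*} [RCLike 𝕜] [NormedRing R] [NormedAlgebra 𝕜 R] [CompleteSpace R]

theorem exp_mul (b : R) : exp (mul 𝕜 R b) = mul 𝕜 R (exp b) := by
  let +nondep : NormedAlgebra ℚ R := .restrictScalars ℚ 𝕜 R
  let +nondep : NormedAlgebra ℚ (R →L[𝕜] R) := .restrictScalars ℚ 𝕜 _
  let mulLeft : R →+* (R →L[𝕜] R) :=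
    { NonUnitalAlgHom.Lmul 𝕜 R with map_one' := ext one_mul }
  exact (map_exp mulLeft (mul 𝕜 R).continuous b).symm

theorem exp_mul_flip (c : R) : exp ((mul 𝕜 R).flip c) = (mul 𝕜 R).flip (exp c) := by
  let +nondep : NormedAlgebra ℚ R := .restrictScalars ℚ 𝕜 R
  let +nondep : NormedAlgebra ℚ (R →L[𝕜] R) := .restrictScalars ℚ 𝕜 _
  let mulRight : Rᵐᵒᵖ →+* (R →L[𝕜] R) :=
    { toFun := fun c ↦ (mul 𝕜 R).flip c.unop
      map_one' := ext mul_one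
      map_mul' := fun _ _ ↦ ext fun _ ↦ (mul_assoc _ _ _).symm
      map_zero' := ext mul_zero
      map_add' := fun _ _ ↦ ext fun _ ↦ mul_add _ _ _ }
  simpa [mulRight, exp_op] using
    (map_exp mulRight ((mul 𝕜 R).flip.continuous.comp MulOpposite.continuous_unop)
      (MulOpposite.op c)).symm

theorem exp_mul_add_mul_flip (b c : R) :
    exp (mul 𝕜 R b + (mul 𝕜 R).flip c) = mul 𝕜 R (exp b) ∘L (mul 𝕜 R).flip (exp c) := by
  let +nondep : NormedAlgebra ℚ (R →L[𝕜] R) := .restrictScalars ℚ 𝕜 _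
  have hcomm : Commute (mul 𝕜 R b) ((mul 𝕜 R).flip c) := ext fun x ↦ (mul_assoc b x c).symm
  rw [exp_add_of_commute hcomm, exp_mul, exp_mul_flip, mul_def]

end Multiplication

end ContinuousLinearMap

theorem isometry_exp_I_smul_mul_add_mul_flip {U : Type*} [CStarAlgebra U] {h k : U}
    (hh : IsSelfAdjoint h) (hk : IsSelfAdjoint k) :
    Isometry ⇑(exp (Complex.I • (mul ℂ U h + (mul ℂ U).flip k))) := by
  let +nondep : NormedAlgebra ℚ U := .restrictScalars ℚ ℂ U
  have hu := exp_mem_unitary_of_mem_skewAdjoint (hh.smul_mem_skewAdjoint Complex.conj_I)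
  have hv := exp_mem_unitary_of_mem_skewAdjoint (hk.smul_mem_skewAdjoint Complex.conj_I)
  rw [smul_add, ← map_smul, ← map_smul, exp_mul_add_mul_flip]
  refine AddMonoidHomClass.isometry_of_norm _ fun x ↦ ?_
  rw [comp_apply, mul_apply', flip_apply, mul_apply', CStarRing.norm_mem_unitary_mul _ hu,
    CStarRing.norm_mul_mem_unitary _ hv]

namespace Unitization

variable (𝕜 A : Type*) [NontriviallyNormedField 𝕜] [NonUnitalNormedRing A] [NormedSpace 𝕜 A]
  [IsScalarTower 𝕜 A A] [SMulCommClass 𝕜 A A] [RegularNormedAlgebra 𝕜 A]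

noncomputable def inrₗᵢ : A →ₗᵢ[𝕜] Unitization 𝕜 A where
  toLinearMap := inrHom 𝕜 𝕜 A
  norm_map' := norm_inr

variable {𝕜 A}

theorem inrₗᵢ_comp_mul_add_mul_flip (b c : A) :
    (inrₗᵢ 𝕜 A).toContinuousLinearMap ∘L (mul 𝕜 A b + (mul 𝕜 A).flip c) =
      (mul 𝕜 (Unitization 𝕜 A) b + (mul 𝕜 (Unitization 𝕜 A)).flip c) ∘L
        (inrₗᵢ 𝕜 A).toContinuousLinearMap := by
  refine ext fun x ↦ ?_
  change ((b * x + x * c : A) : Unitization 𝕜 A) = b * x + x * c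
  rw [inr_add, inr_mul, inr_mul]

end Unitization

/-- For every element `a` of a C*-algebra `A` and every real `t`, the operator
`exp (i t L(a,a))`, where `L(a,a) x = (a a* x + x a* a)/2`, is a bijective linear isometry
of `A`; thus `{exp (i t L(a,a)) : t ∈ ℝ}` is a one-parameter group of surjective linear
isometries on `A`. -/
theorem exp_smul_L_isometry {A : Type*} [NonUnitalCStarAlgebra A] (a : A)
    (L : A →L[ℂ] A)
    (hL : ∀ x : A, L x = (2 : ℂ)⁻¹ • (a * star a * x + x * (star a * a))) :
    ∀ t : ℝ,
      Function.Bijective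
          ⇑(NormedSpace.exp ((Complex.I * t) • L) : A →L[ℂ] A) ∧
        Isometry ⇑(NormedSpace.exp ((Complex.I * t) • L) : A →L[ℂ] A) := by
  intro t
  set b : A := (t / 2 : ℝ) • (a * star a)
  set c : A := (t / 2 : ℝ) • (star a * a)
  have hT : (Complex.I * t) • L = Complex.I • (mul ℂ A b + (mul ℂ A).flip c) := by
    ext x
    simp only [smul_apply, hL, add_apply, mul_apply', flip_apply, b, c, smul_mul_assoc,
      mul_smul_comm, ← smul_add, smul_smul, ← Complex.coe_smul]
    congr 1
    push_cast
    ring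
  have hb : IsSelfAdjoint (b : Unitization ℂ A) :=
    ((IsSelfAdjoint.all (t / 2 : ℝ)).smul (.mul_star_self a)).inr ℂ
  have hc : IsSelfAdjoint (c : Unitization ℂ A) :=
    ((IsSelfAdjoint.all (t / 2 : ℝ)).smul (.star_mul_self a)).inr ℂ
  refine ⟨bijective_exp _, ?_⟩
  rw [hT]
  refine isometry_exp_of_comp_eq (Unitization.inrₗᵢ ℂ A) ?_
    (isometry_exp_I_smul_mul_add_mul_flip hb hc)
  rw [comp_smul, smul_comp, Unitization.inrₗᵢ_comp_mul_add_mul_flip]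
end

section
/- Let e be a partial isometry (e e* e = e) in a C*-algebra A. Then for every t ∈ ℝ and every x ∈ A, exp(i t L(e,e))(x) = e^{it} · (e e* x e* e) + e^{it/2} · (e e* x + x e* e − 2 e e* x e* e) + (x − e e* x − x e* e + e e* x e* e), i.e., exp(i t L(e,e)) = e^{it} P_2(e) + e^{it/2} P_1(e) + P_0(e), where P_2(e), P_1(e), P_0(e) are the Peirce projections associated with e. -/
/-!
With `p = e e*` and `q = e* e`, the relation `e e* e = e` makes `p` and `q` idempotent, and
`L(e,e) x = (p x + x q) / 2`. The three Peirce components `p x q`, `p x + x q - 2 p x q` and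
`x - p x - x q + p x q` of `x` add up to `x` and are eigenvectors of `L(e,e)` with eigenvalues
`1`, `1/2` and `0`. Since `exp T v = exp c • v` whenever `T v = c • v`, applying
`exp (i t L(e,e))` to the decomposition of `x` gives the formula.
-/

open NormedSpace in
theorem ContinuousLinearMap.exp_apply_of_apply_eq_smul {𝕂 E : Type*} [RCLike 𝕂]
    [NormedAddCommGroup E] [NormedSpace 𝕂 E] [CompleteSpace E]
    {T : E →L[𝕂] E} {v : E} {c : 𝕂} (h : T v = c • v) :
    exp T v = exp c • v := by
  have hpow : ∀ n : ℕ, (T ^ n) v = c ^ n • v := by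
    intro n
    induction n with
    | zero => simp
    | succ n ih => rw [pow_succ', mul_apply_eq_comp, ih, map_smul, h, smul_smul, pow_succ]
  refine ((exp_series_hasSum_exp' (𝕂 := 𝕂) T).mapL (apply 𝕂 E v)).unique ?_
  simpa only [apply_apply, smul_apply, hpow, smul_smul, smul_eq_mul] using
    (exp_series_hasSum_exp' (𝕂 := 𝕂) c).smul_const v

theorem isIdempotentElem_mul_of_mul_mul_eq_self {M : Type*} [Semigroup M] {e f : M}
    (h : e * f * e = e) : IsIdempotentElem (e * f) := by
  rw [IsIdempotentElem, ← mul_assoc, h]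

theorem isIdempotentElem_mul_rev_of_mul_mul_eq_self {M : Type*} [Semigroup M] {e f : M}
    (h : e * f * e = e) : IsIdempotentElem (f * e) := by
  rw [IsIdempotentElem, mul_assoc, ← mul_assoc e, h]

section Peirce

variable {A : Type*} [NonUnitalRing A]

theorem peirce_decomposition (p q x : A) :
    p * x * q + (p * x + x * q - 2 • (p * x * q)) + (x - p * x - x * q + p * x * q) = x := by
  abel

namespace IsIdempotentElem

variable {p q : A}

theorem mul_add_mul_peirce₂ (hp : IsIdempotentElem p) (hq : IsIdempotentElem q) (x : A) :
    p * (p * x * q) + p * x * q * q = 2 • (p * x * q) := by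
  rw [← mul_assoc, ← mul_assoc, hp.eq, mul_assoc _ q, hq.eq, two_nsmul]

theorem mul_add_mul_peirce₁ (hp : IsIdempotentElem p) (hq : IsIdempotentElem q) (x : A) :
    p * (p * x + x * q - 2 • (p * x * q)) + (p * x + x * q - 2 • (p * x * q)) * q =
      p * x + x * q - 2 • (p * x * q) := by
  simp only [mul_sub, mul_add, sub_mul, add_mul, mul_smul_comm, smul_mul_assoc, ← mul_assoc,
    hp.eq]
  simp only [mul_assoc, hq.eq]
  abel

theorem mul_add_mul_peirce₀ (hp : IsIdempotentElem p) (hq : IsIdempotentElem q) (x : A) :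
    p * (x - p * x - x * q + p * x * q) + (x - p * x - x * q + p * x * q) * q = 0 := by
  simp only [mul_sub, mul_add, sub_mul, add_mul, ← mul_assoc, hp.eq]
  simp only [mul_assoc, hq.eq]
  abel

end IsIdempotentElem

end Peirce

open NormedSpace in
theorem exp_smul_apply_of_apply_eq_half_mul_add_mul {𝕜 A : Type*} [RCLike 𝕜]
    [NonUnitalNormedRing A] [NormedSpace 𝕜 A] [IsScalarTower 𝕜 A A]
    [SMulCommClass 𝕜 A A] [CompleteSpace A] {p q : A}
    (hp : IsIdempotentElem p) (hq : IsIdempotentElem q)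
    (L : A →L[𝕜] A) (hL : ∀ x : A, L x = (2 : 𝕜)⁻¹ • (p * x + x * q)) (z : 𝕜) (x : A) :
    exp (z • L) x =
      exp z • (p * x * q) + exp (z / 2) • (p * x + x * q - 2 • (p * x * q)) +
        (x - p * x - x * q + p * x * q) := by
  have hzL : ∀ y, (z • L) y = (z / 2) • (p * y + y * q) := fun y => by
    rw [smul_apply, hL, smul_smul, div_eq_mul_inv]
  have h₂ : (z • L) (p * x * q) = z • (p * x * q) := by
    rw [hzL, hp.mul_add_mul_peirce₂ hq, ← ofNat_smul_eq_nsmul 𝕜, smul_smul,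
      div_mul_cancel₀ _ two_ne_zero]
  have h₁ : (z • L) (p * x + x * q - 2 • (p * x * q)) =
      (z / 2) • (p * x + x * q - 2 • (p * x * q)) := by
    rw [hzL, hp.mul_add_mul_peirce₁ hq]
  have h₀ : (z • L) (x - p * x - x * q + p * x * q) =
      (0 : 𝕜) • (x - p * x - x * q + p * x * q) := by
    rw [hzL, hp.mul_add_mul_peirce₀ hq, smul_zero, zero_smul]
  conv_lhs => rw [← peirce_decomposition p q x]
  rw [map_add, map_add, ContinuousLinearMap.exp_apply_of_apply_eq_smul h₂,
    ContinuousLinearMap.exp_apply_of_apply_eq_smul h₁,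
    ContinuousLinearMap.exp_apply_of_apply_eq_smul h₀, exp_zero, one_smul]

/-- For a partial isometry `e` in a C*-algebra `A` (`e e* e = e`), the operator
`exp (i t L(e,e))` acts as `e^{it} P₂(e) + e^{it/2} P₁(e) + P₀(e)`, where
`P₂(e) x = e e* x e* e`, `P₁(e) x = e e* x + x e* e − 2 e e* x e* e` and
`P₀(e) x = x − e e* x − x e* e + e e* x e* e` are the Peirce projections of `e`. -/
theorem exp_L_partial_isometry_peirce {A : Type*} [NonUnitalCStarAlgebra A] (e : A)
    (he : e * star e * e = e)
    (L : A →L[ℂ] A)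
    (hL : ∀ x : A, L x = (2 : ℂ)⁻¹ • (e * star e * x + x * (star e * e))) :
    ∀ (t : ℝ) (x : A),
      (NormedSpace.exp ((Complex.I * t) • L) : A →L[ℂ] A) x =
        Complex.exp (Complex.I * t) • (e * star e * x * (star e * e)) +
          Complex.exp (Complex.I * t / 2) •
            (e * star e * x + x * (star e * e) - (2 : ℂ) • (e * star e * x * (star e * e))) +
          (x - e * star e * x - x * (star e * e) + e * star e * x * (star e * e)) := by
  intro t x
  rw [exp_smul_apply_of_apply_eq_half_mul_add_mul
      (isIdempotentElem_mul_of_mul_mul_eq_self he)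
      (isIdempotentElem_mul_rev_of_mul_mul_eq_self he) L hL,
    ofNat_smul_eq_nsmul ℂ, Complex.exp_eq_exp_ℂ]
end

section
/- Let A be a unital C*-algebra, let h be a self-adjoint element of the center of A, and let d be a bounded *-derivation on A (d(ab) = d(a)b + ad(b), d(a*) = d(a)* for all a,b ∈ A). For t ∈ ℝ set T_t = exp(t (L_h + d)), where L_h(x) = h x. Then {T_t : t ∈ ℝ} is a uniformly continuous one-parameter group of bounded linear bijections on A, each T_t is symmetric (T_t(a*) = T_t(a)* for all a ∈ A) and orthogonality preserving, and T_t(1) = exp(t h) for every t ∈ ℝ. -/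
/-!
Write `M = L_h + d`, so that `T_t = exp (t M)`; the group laws hold in the Banach algebra of
operators. Since `h` is central, `D = L_{2h} + d` satisfies the twisted Leibniz rule
`D (u v) = M u * v + u * M v`, and then `c ↦ exp ((1 - c) D) (exp (c M) x * exp (c M) y)` has zero
derivative, so `T_t x * T_t y = exp (t D) (x y)`; together with `T_t (a*) = (T_t a)*`, which holds
because `M` commutes with the involution, this gives orthogonality preservation.
For `T_t 1 = exp (t h)` one needs `d h = 0`: as `d h` is central,
`d (exp (i t h)) = i t exp (i t h) d h` (computed in the square-zero extension `A ⊕ ε A`, into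
which `a ↦ a + ε d a` is a ring homomorphism), and `exp (i t h)` is unitary, so
`|t| ‖d h‖ ≤ ‖d‖` for every real `t`.
-/

def IsOrthogonal {A : Type*} [NonUnitalCStarAlgebra A] (a b : A) : Prop :=
  a * star b = 0 ∧ star b * a = 0

open NormedSpace ContinuousLinearMap TrivSqZeroExt Filter Topology
open scoped Nat

section Leibniz

variable {A : Type*} [Ring A] {F : Type*} [FunLike F A A]

theorem derivation_map_one {d : F} (hd : ∀ a b, d (a * b) = d a * b + a * d b) : d 1 = 0 := by
  simpa using hd 1 1

theorem derivation_pow_eq_zero {d : F} (hd : ∀ a b, d (a * b) = d a * b + a * d b) {x : A}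
    (hx : d x = 0) (n : ℕ) : d (x ^ n) = 0 := by
  induction n with
  | zero => simpa using derivation_map_one hd
  | succ n ih => rw [pow_succ, hd, ih, hx, zero_mul, mul_zero, add_zero]

theorem commute_derivation_apply {d : F} (hd : ∀ a b, d (a * b) = d a * b + a * d b) {z : A}
    (hz : ∀ a, Commute z a) (a : A) : Commute (d z) a := by
  have h := hd z a
  rw [(hz a).eq, hd, (hz (d a)).eq] at h
  exact (add_left_cancel (h.trans (add_comm _ _))).symm

def derivationToTrivSqZeroExt [AddMonoidHomClass F A A] (d : F)
    (hd : ∀ a b, d (a * b) = d a * b + a * d b) : A →+* TrivSqZeroExt A A where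
  toFun a := inl a + inr (d a)
  map_one' := by simp [derivation_map_one hd]
  map_mul' a b := by ext <;> simp [hd, add_comm]
  map_zero' := by simp
  map_add' a b := by ext <;> simp

end Leibniz

theorem derivation_exp_of_commute {𝔸 : Type*} [NormedRing 𝔸] [NormedAlgebra ℚ 𝔸] [CompleteSpace 𝔸]
    {F : Type*} [FunLike F 𝔸 𝔸] [AddMonoidHomClass F 𝔸 𝔸] {d : F} (hd_cont : Continuous d)
    (hd : ∀ a b, d (a * b) = d a * b + a * d b) {x : 𝔸} (hx : Commute x (d x)) :
    d (exp x) = exp x * d x := by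
  have h := congrArg snd <| map_exp (derivationToTrivSqZeroExt d hd)
    ((continuous_inl (M := 𝔸)).add (continuous_inr.comp hd_cont)) x
  rw [exp_def_of_smul_comm] at h
  · simpa [derivationToTrivSqZeroExt] using h
  · simpa [derivationToTrivSqZeroExt] using hx.eq.symm

theorem derivation_eq_zero_of_isSelfAdjoint_of_forall_commute {A : Type*} [CStarAlgebra A]
    {d : A →L[ℂ] A} (hd : ∀ a b, d (a * b) = d a * b + a * d b) {z : A} (hsa : IsSelfAdjoint z)
    (hz : ∀ a, Commute z a) : d z = 0 := by
  let +nondep : NormedAlgebra ℚ A := .restrictScalars ℚ ℂ A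
  nontriviality A
  have hbound : ∀ t : ℝ, |t| * ‖d z‖ ≤ ‖d‖ := by
    intro t
    set x : A := ((t : ℂ) * Complex.I) • z
    have hx : x ∈ skewAdjoint A :=
      hsa.smul_mem_skewAdjoint (by simp [skewAdjoint.mem_iff, Complex.conj_ofReal])
    set u : unitary A := ⟨exp x, exp_mem_unitary_of_mem_skewAdjoint hx⟩
    have hdu : d u = ((t : ℂ) * Complex.I) • ((u : A) * d z) := by
      rw [show (u : A) = exp x from rfl, derivation_exp_of_commute d.continuous hd
        (by rw [map_smul]; exact (commute_derivation_apply hd hz x).symm.smul_right _)]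
      simp [x]
    calc |t| * ‖d z‖ = ‖d u‖ := by simp [hdu, norm_smul, CStarRing.norm_coe_unitary_mul]
      _ ≤ ‖d‖ * ‖(u : A)‖ := d.le_opNorm _
      _ = ‖d‖ := by rw [CStarRing.norm_coe_unitary, mul_one]
  by_contra hne
  have hpos := norm_pos_iff.mpr hne
  have := hbound ((‖d‖ + 1) / ‖d z‖)
  rw [abs_of_pos (by positivity), div_mul_cancel₀ _ hpos.ne'] at this
  linarith

section OperatorExp

variable {𝕜 E : Type*} [RCLike 𝕜] [NormedAddCommGroup E] [NormedSpace 𝕜 E] [CompleteSpace E]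

theorem hasSum_exp_apply (N : E →L[𝕜] E) (x : E) :
    HasSum (fun n => (n !⁻¹ : 𝕜) • (N ^ n) x) (exp N x) :=
  (exp_series_hasSum_exp' (𝕂 := 𝕜) N).mapL (apply 𝕜 E x)

theorem map_exp_apply {E' : Type*} [NormedAddCommGroup E'] [NormedSpace 𝕜 E'] [CompleteSpace E']
    {F : Type*} [FunLike F E E'] [AddMonoidHomClass F E E'] {f : F} (hf : Continuous f)
    {N : E →L[𝕜] E} {B : E' →L[𝕜] E'} (h : ∀ x, f (N x) = B (f x)) (x : E) :
    f (exp N x) = exp B (f x) := by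
  have hpow : ∀ n x, f ((N ^ n) x) = (B ^ n) (f x) := by
    intro n
    induction n with
    | zero => simp
    | succ n ih => intro x; rw [pow_succ, mul_apply_eq_comp, ih, h, pow_succ, mul_apply_eq_comp]
  refine ((hasSum_exp_apply N x).map f hf).unique ?_
  simpa only [Function.comp_def, map_inv_natCast_smul f 𝕜 𝕜, hpow] using hasSum_exp_apply B (f x)

end OperatorExp

theorem exp_apply_mul_exp_apply {𝕜 𝔸 : Type*} [RCLike 𝕜] [NormedRing 𝔸] [NormedAlgebra 𝕜 𝔸]
    [CompleteSpace 𝔸] {G D : 𝔸 →L[𝕜] 𝔸}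
    (hGD : ∀ u v, D (u * v) = G u * v + u * G v) (x y : 𝔸) :
    exp G x * exp G y = exp D (x * y) := by
  set p : 𝕜 → 𝔸 := fun c => exp (c • G) x * exp (c • G) y
  have hp : ∀ c, HasDerivAt p (D (p c)) c := fun c => by
    have hexp : ∀ w, HasDerivAt (fun c : 𝕜 => exp (c • G) w) (G (exp (c • G) w)) c := fun w => by
      simpa using (hasDerivAt_exp_smul_const' G c).clm_apply (hasDerivAt_const c w)
    have := (hexp x).mul (hexp y)
    rwa [← hGD] at this
  have hq : ∀ c : 𝕜, HasDerivAt (fun c : 𝕜 => exp ((1 - c) • D)) (-(D * exp ((1 - c) • D))) c :=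
    fun c => by
      simpa [Function.comp_def] using (hasDerivAt_exp_smul_const' D (1 - c)).scomp c
        ((hasDerivAt_const c 1).sub (hasDerivAt_id c))
  have hconst : ∀ c, HasDerivAt (fun c => exp ((1 - c) • D) (p c)) 0 c := fun c => by
    have hcomm : Commute D (exp ((1 - c) • D)) := Commute.exp_right <| by
      ext v; simp
    have := (hq c).clm_apply (hp c)
    rwa [← mul_apply_eq_comp, ← hcomm.eq, neg_apply, neg_add_cancel] at this
  have h0 : ∀ F : 𝔸 →L[𝕜] 𝔸, (0 : 𝕜) • F = 0 := fun F => zero_smul 𝕜 F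
  simpa [p, h0] using is_const_of_deriv_eq_zero (fun c => (hconst c).differentiableAt)
    (fun c => (hconst c).deriv) 1 0

section OneParameterGroup

variable {𝔸 : Type*} [NormedRing 𝔸] [NormedAlgebra ℂ 𝔸] [CompleteSpace 𝔸]

theorem exp_ofReal_add_smul (M : 𝔸) (t s : ℝ) :
    exp (((t + s : ℝ) : ℂ) • M) = exp ((t : ℂ) • M) * exp ((s : ℂ) • M) := by
  let +nondep : NormedAlgebra ℚ 𝔸 := .restrictScalars ℚ ℂ 𝔸
  rw [Complex.ofReal_add, add_smul,
    exp_add_of_commute (((Commute.refl M).smul_left _).smul_right _)]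

theorem tendsto_exp_ofReal_smul_nhds_zero (M : 𝔸) :
    Tendsto (fun t : ℝ => exp ((t : ℂ) • M)) (𝓝 0) (𝓝 1) := by
  let +nondep : NormedAlgebra ℚ 𝔸 := .restrictScalars ℚ ℂ 𝔸
  have hcont : Continuous fun t : ℝ => exp ((t : ℂ) • M) := exp_continuous.comp (by fun_prop)
  simpa using hcont.tendsto 0

end OneParameterGroup

section LeftMulAddDerivation

variable {A : Type*} [CStarAlgebra A] {z : A} {d : A →L[ℂ] A}

theorem mul_add_derivation_apply_star (hsa : IsSelfAdjoint z) (hz : ∀ a, Commute z a)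
    (hdstar : ∀ a, d (star a) = star (d a)) (a : A) :
    (mul ℂ A z + d) (star a) = star ((mul ℂ A z + d) a) := by
  simp [hdstar, hsa.star_eq, (hz (star a)).eq]

theorem smul_mul_two_smul_add_derivation_apply_mul (hz : ∀ a, Commute z a)
    (hd : ∀ a b, d (a * b) = d a * b + a * d b) (c : ℂ) (u v : A) :
    (c • (mul ℂ A ((2 : ℂ) • z) + d)) (u * v) =
      (c • (mul ℂ A z + d)) u * v + u * (c • (mul ℂ A z + d)) v := by
  have huv : u * (z * v) = z * (u * v) := by rw [← mul_assoc, ← (hz u).eq, mul_assoc]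
  simp only [smul_apply, add_apply, mul_apply', hd, add_mul, mul_add, huv, two_smul, mul_assoc,
    smul_mul_assoc, mul_smul_comm, ← smul_add]
  congr 1
  abel

theorem exp_smul_mul_add_derivation_apply_one (hd : ∀ a b, d (a * b) = d a * b + a * d b)
    (hdz : d z = 0) (c : ℂ) : exp (c • (mul ℂ A z + d)) 1 = exp (c • z) := by
  have hpow : ∀ n : ℕ, ((c • (mul ℂ A z + d)) ^ n) 1 = (c • z) ^ n := by
    intro n
    induction n with
    | zero => simp
    | succ n ih =>
      rw [pow_succ', mul_apply_eq_comp, ih, pow_succ']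
      simp [derivation_pow_eq_zero hd (show d (c • z) = 0 by simp [hdz])]
  have h := hasSum_exp_apply (c • (mul ℂ A z + d)) (1 : A)
  simp only [hpow] at h
  exact h.unique (exp_series_hasSum_exp' (c • z))

end LeftMulAddDerivation

/-- Let `A` be a unital C*-algebra, `h` a self-adjoint central element of `A` and `d` a
bounded *-derivation on `A`.  Then `T_t := exp (t (L_h + d))` is a uniformly continuous
one-parameter group of bounded linear bijections on `A`, each `T_t` is symmetric and
orthogonality preserving, and `T_t 1 = exp (t h)` for every real `t`. -/
theorem one_parameter_group_exp_mul_add_derivation {A : Type*} [CStarAlgebra A]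
    (h : A) (hsa : IsSelfAdjoint h) (hc : ∀ a : A, h * a = a * h)
    (d : A →L[ℂ] A)
    (hd : ∀ a b : A, d (a * b) = d a * b + a * d b)
    (hdstar : ∀ a : A, d (star a) = star (d a))
    (T : ℝ → A →L[ℂ] A)
    (hT : ∀ t : ℝ, T t = NormedSpace.exp ((t : ℂ) • (ContinuousLinearMap.mul ℂ A h + d))) :
    T 0 = ContinuousLinearMap.id ℂ A ∧
      (∀ t s : ℝ, T (t + s) = (T t).comp (T s)) ∧
      Filter.Tendsto (fun t : ℝ => ‖T t - ContinuousLinearMap.id ℂ A‖) (nhds 0) (nhds 0) ∧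
      (∀ t : ℝ, Function.Bijective (T t)) ∧
      (∀ (t : ℝ) (a : A), T t (star a) = star (T t a)) ∧
      (∀ (t : ℝ) (a b : A), IsOrthogonal a b → IsOrthogonal (T t a) (T t b)) ∧
      (∀ t : ℝ, T t 1 = NormedSpace.exp ((t : ℂ) • h)) := by
  let +nondep : NormedAlgebra ℚ (A →L[ℂ] A) := .restrictScalars ℚ ℂ _
  have hstar : ∀ (t : ℝ) (a : A), T t (star a) = star (T t a) := fun t a => by
    refine hT t ▸ (map_exp_apply (f := starAddEquiv) continuous_star (fun x => ?_) a).symm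
    simp only [starAddEquiv_apply, smul_apply, mul_add_derivation_apply_star hsa hc hdstar,
      star_smul, Complex.star_def, Complex.conj_ofReal]
  have hmul : ∀ (t : ℝ) (x y : A), x * y = 0 → T t x * T t y = 0 := fun t x y hxy => by
    rw [hT, exp_apply_mul_exp_apply (smul_mul_two_smul_add_derivation_apply_mul hc hd _), hxy,
      map_zero]
  refine ⟨?_, fun t s => ?_, ?_, fun t => ?_, hstar, fun t a b hab => ?_, fun t => ?_⟩
  · rw [hT, Complex.ofReal_zero, zero_smul, exp_zero, one_def]
  · rw [hT, hT, hT, ← mul_def]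
    exact exp_ofReal_add_smul (mul ℂ A h + d) t s
  · simpa [hT, one_def] using
      ((tendsto_exp_ofReal_smul_nhds_zero (mul ℂ A h + d)).sub_const 1).norm
  · exact hT t ▸ isUnit_iff_bijective.mp (isUnit_exp _)
  · exact ⟨hstar t b ▸ hmul t _ _ hab.1, hstar t b ▸ hmul t _ _ hab.2⟩
  · rw [hT, exp_smul_mul_add_derivation_apply_one hd
      (derivation_eq_zero_of_isSelfAdjoint_of_forall_commute hd hsa hc)]
end
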